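/- arXiv:1006.2713 — 12 statements merged into one kernel-verified Lean document; each statement's English description precedes it below -/
import Mathlib

section
/- Let n and m be positive integers, let A be an n×n complex matrix and C an m×n complex matrix, and let the subspaces S_k of ℂ^n be defined by the recursion S_0 = ker C and S_{k+1} = (A S_k) ∩ S_0. Then S_n = {0} if and only if there exists no pair (λ, v) with λ ∈ ℂ, λ ≠ 0, v ∈ ℂ^n, v ≠ 0, such that A v = λ v and C v = 0 (i.e., the Popov–Belevitch–Hautus condition holds for all nonzero λ). -/
/-- **PBH test, geometric version (Lemma 1).**
Given an `n × n` complex matrix `A` and an `m × n` complex matrix `C` (`n, m ≥ 1`),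
with subspaces `S 0 = ker C` and `S (k+1) = A (S k) ⊓ S 0`, one has `S n = {0}`
iff there is no pair `(λ, v)` with `λ ≠ 0`, `v ≠ 0`, `A v = λ v` and `C v = 0`. -/
theorem stmt0 {n m : ℕ} (hn : 0 < n) (hm : 0 < m)
    (A : Matrix (Fin n) (Fin n) ℂ) (C : Matrix (Fin m) (Fin n) ℂ)
    (S : ℕ → Submodule ℂ (Fin n → ℂ))
    (hS0 : S 0 = LinearMap.ker C.mulVecLin)
    (hSrec : ∀ k : ℕ, S (k + 1) = (S k).map A.mulVecLin ⊓ S 0) :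
    S n = ⊥ ↔
      ¬ ∃ (lam : ℂ) (v : Fin n → ℂ), lam ≠ 0 ∧ v ≠ 0 ∧
        A.mulVec v = lam • v ∧ C.mulVec v = 0 := by
  constructor
  · -- forward: if S n = ⊥ then no eigenpair
    rintro hbot ⟨lam, v, hlam, hv, hAv, hCv⟩
    have hmem : ∀ k, v ∈ S k := by
      intro k
      induction k with
      | zero => rw [hS0]; simpa [Matrix.mulVecLin_apply] using hCv
      | succ k ih =>
        rw [hSrec k]
        refine ⟨?_, ?_⟩
        · refine ⟨lam⁻¹ • v, Submodule.smul_mem _ _ ih, ?_⟩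
          simp [Matrix.mulVecLin_apply, Matrix.mulVec_smul, hAv,
            smul_smul, inv_mul_cancel₀ hlam]
        · rw [hS0]; simpa [Matrix.mulVecLin_apply] using hCv
    have := hmem n
    rw [hbot, Submodule.mem_bot] at this
    exact hv this
  · -- backward
    intro hno
    -- S is decreasing
    have hdec : ∀ k, S (k + 1) ≤ S k := by
      intro k
      induction k with
      | zero => rw [hSrec 0]; exact inf_le_right
      | succ k ih =>
        rw [hSrec (k + 1)]
        conv_rhs => rw [hSrec k]
        exact inf_le_inf_right _ (Submodule.map_mono ih)
    -- if some step stabilizes, all later stay equal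
    have hstab : ∀ k, S (k + 1) = S k → ∀ i, S (k + i) = S k := by
      intro k hk i
      induction i with
      | zero => rfl
      | succ i ih =>
        have : k + (i + 1) = (k + i) + 1 := by ring
        rw [this, hSrec (k + i), ih, ← hSrec k, hk]
    -- a stabilized nonzero subspace gives an eigenpair: contradiction
    have hnotstab : ∀ k, S (k + 1) = S k → S k = ⊥ := by
      intro k hk
      by_contra hne
      set W := S k with hW
      have hWle0 : W ≤ S 0 := by
        rw [← hk, hSrec k]; exact inf_le_right
      have hWleMap : W ≤ W.map A.mulVecLin := by
        conv_lhs => rw [← hk]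
        rw [hSrec k]; exact inf_le_left
      have hmapeq : W.map A.mulVecLin = W := by
        refine (Submodule.eq_of_le_of_finrank_le hWleMap ?_).symm
        exact Submodule.finrank_map_le _ _
      have hmaps : ∀ x ∈ W, A.mulVecLin x ∈ W := by
        intro x hx
        rw [← hmapeq]
        exact Submodule.mem_map_of_mem hx
      let f : W →ₗ[ℂ] W := A.mulVecLin.restrict hmaps
      have hsurj : Function.Surjective f := by
        rintro ⟨y, hy⟩
        rw [← hmapeq] at hy
        obtain ⟨x, hx, hxy⟩ := hy
        exact ⟨⟨x, hx⟩, Subtype.ext hxy⟩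
      have hinj : Function.Injective f :=
        (LinearMap.injective_iff_surjective).mpr hsurj
      haveI : Nontrivial W := Submodule.nontrivial_iff_ne_bot.mpr hne
      obtain ⟨lam, hlam⟩ := Module.End.exists_eigenvalue f
      obtain ⟨v, hfv⟩ := hlam.exists_hasEigenvector
      have hv0 : v ≠ 0 := hfv.right
      have happ : f v = lam • v := hfv.apply_eq_smul
      have hlam0 : lam ≠ 0 := by
        rintro rfl
        have : f v = 0 := by rw [happ]; simp
        exact hv0 (hinj (by simpa using this))
      refine hno ⟨lam, (v : Fin n → ℂ), hlam0, ?_, ?_, ?_⟩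
      · simpa using (Subtype.coe_injective.ne hv0 : (v : Fin n → ℂ) ≠ _)
      · have : ((f v : W) : Fin n → ℂ) = A.mulVecLin (v : Fin n → ℂ) := rfl
        have h2 : ((f v : W) : Fin n → ℂ) = lam • (v : Fin n → ℂ) := by
          rw [happ]; rfl
        rw [← Matrix.mulVecLin_apply, ← this, h2]
      · have := hWle0 v.2
        rw [hS0] at this
        simpa [Matrix.mulVecLin_apply] using this
    -- case on whether chain stabilizes before n
    by_cases hcase : ∃ k < n, S (k + 1) = S k
    · obtain ⟨k, hk, heq⟩ := hcase
      have hSk : S k = ⊥ := hnotstab k heq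
      have : S n = S k := by
        have := hstab k heq (n - k)
        rwa [Nat.add_sub_cancel' (le_of_lt hk)] at this
      rw [this, hSk]
    · push_neg at hcase
      -- strictly decreasing: finrank drops by 1 each step
      have hstrict : ∀ k < n, Module.finrank ℂ (S (k + 1)) < Module.finrank ℂ (S k) := by
        intro k hk
        exact Submodule.finrank_lt_finrank_of_lt (lt_of_le_of_ne (hdec k) (hcase k hk))
      have hchain : ∀ k ≤ n, Module.finrank ℂ (S k) + k ≤ Module.finrank ℂ (S 0) := by
        intro k hk
        induction k with
        | zero => simp
        | succ k ih =>
          have h1 := hstrict k (lt_of_lt_of_le (Nat.lt_succ_self k) hk)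
          have h2 := ih (le_of_lt (lt_of_lt_of_le (Nat.lt_succ_self k) hk))
          omega
      have h0 : Module.finrank ℂ (S 0) ≤ n := by
        have := Submodule.finrank_le (S 0)
        simpa using this
      have hfin : Module.finrank ℂ (S n) = 0 := by
        have := hchain n le_rfl
        omega
      exact Submodule.finrank_eq_zero.mp hfin
end

section
/- Let A be an n×n complex matrix and C an m×n complex matrix, and let the subspaces S_k of ℂ^n be defined by S_0 = ker C and S_{k+1} = (A S_k) ∩ S_0. If for some ℓ ∈ ℕ one has S_{ℓ+1} = S_ℓ and S_ℓ ≠ {0}, then A S_ℓ = S_ℓ, and consequently there exist a vector v ∈ S_ℓ with v ≠ 0 and a scalar λ ∈ ℂ with λ ≠ 0 such that A v = λ v and C v = 0. -/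
/-- If `S (ℓ+1) = S ℓ` and `S ℓ ≠ {0}`, then `A (S ℓ) = S ℓ`, and consequently there
exist `v ∈ S ℓ`, `v ≠ 0`, and `λ ≠ 0` with `A v = λ v` and `C v = 0`. -/
theorem stmt2 {n m : ℕ}
    (A : Matrix (Fin n) (Fin n) ℂ) (C : Matrix (Fin m) (Fin n) ℂ)
    (S : ℕ → Submodule ℂ (Fin n → ℂ))
    (hS0 : S 0 = LinearMap.ker C.mulVecLin)
    (hSrec : ∀ k : ℕ, S (k + 1) = (S k).map A.mulVecLin ⊓ S 0)
    (ℓ : ℕ) (hfix : S (ℓ + 1) = S ℓ) (hne : S ℓ ≠ ⊥) :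
    (S ℓ).map A.mulVecLin = S ℓ ∧
      ∃ (v : Fin n → ℂ) (lam : ℂ), v ∈ S ℓ ∧ v ≠ 0 ∧ lam ≠ 0 ∧
        A.mulVec v = lam • v ∧ C.mulVec v = 0 := by
  set f := A.mulVecLin with hf
  have h1 : S ℓ ≤ (S ℓ).map f := by
    conv_lhs => rw [← hfix, hSrec]
    exact inf_le_left
  have heq : (S ℓ).map f = S ℓ :=
    (Submodule.eq_of_le_of_finrank_le h1 (Submodule.finrank_map_le f (S ℓ))).symm
  have hsub : S ℓ ≤ S 0 := by
    cases ℓ with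
    | zero => exact le_rfl
    | succ k => rw [hSrec]; exact inf_le_right
  refine ⟨heq, ?_⟩
  -- restricted endomorphism
  have hmaps : ∀ x ∈ S ℓ, f x ∈ S ℓ := by
    intro x hx
    rw [← heq]; exact Submodule.mem_map_of_mem hx
  let g : Module.End ℂ (S ℓ) := f.restrict hmaps
  have hgsurj : Function.Surjective g := by
    intro y
    have : (y : Fin n → ℂ) ∈ (S ℓ).map f := by rw [heq]; exact y.2
    obtain ⟨x, hx, hfx⟩ := this
    exact ⟨⟨x, hx⟩, Subtype.ext hfx⟩
  have hginj : Function.Injective g :=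
    (LinearMap.injective_iff_surjective).mpr hgsurj
  have : Nontrivial (S ℓ) := Submodule.nontrivial_iff_ne_bot.mpr hne
  obtain ⟨lam, hlam⟩ := Module.End.exists_eigenvalue g
  obtain ⟨v, hv⟩ := hlam.exists_hasEigenvector
  have hv0 : (v : Fin n → ℂ) ≠ 0 := fun h => hv.2 (Subtype.ext h)
  have hlam0 : lam ≠ 0 := by
    intro h
    apply hv.2
    apply hginj
    rw [hv.apply_eq_smul, h, zero_smul, map_zero]
  refine ⟨v, lam, v.2, hv0, hlam0, ?_, ?_⟩
  · have := hv.apply_eq_smul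
    have := congrArg Subtype.val this
    simpa [g, LinearMap.restrict_apply, f, Matrix.mulVecLin_apply] using this
  · have hvk : (v : Fin n → ℂ) ∈ LinearMap.ker C.mulVecLin := by
      rw [← hS0]; exact hsub v.2
    simpa [Matrix.mulVecLin_apply] using hvk
end

section
/- Let A be an n×n real matrix and C an m×n real matrix. Take X = ℝ^n, Y = ℝ^m, f(x) = A x, h(x) = C x, and let the sets [x]_k be defined as in the context, and let the subspaces S_k be defined by S_0 = ker C and S_{k+1} = (A S_k) ∩ S_0. Then for every k ∈ ℕ and every x ∈ ℝ^n: if x lies in the range of A^k then [x]_k = x + S_k = {x + s : s ∈ S_k}, and if x does not lie in the range of A^k then [x]_k = ∅. -/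
/-- The equivalence class `[x]ₖ`:
`[x]₀ = {z | h z = h x}`, `[x]ₖ⁺ = f '' [f⁻¹ x]ₖ`, `[x]_{k+1} = [x]ₖ⁺ ∩ [x]₀`. -/
def cls {X Y : Type*} (f : X → X) (h : X → Y) : ℕ → X → Set X
  | 0, x => {z | h z = h x}
  | k + 1, x => {v | ∃ z w, f w = x ∧ z ∈ cls f h k w ∧ f z = v} ∩ {z | h z = h x}

/-- For the linear system `x⁺ = A x`, `y = C x` (real matrices), with
`S 0 = ker C`, `S (k+1) = A (S k) ⊓ S 0`:
`[x]ₖ = x + S k` when `x ∈ range (Aᵏ)`, and `[x]ₖ = ∅` otherwise. -/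
theorem stmt6 {n m : ℕ}
    (A : Matrix (Fin n) (Fin n) ℝ) (C : Matrix (Fin m) (Fin n) ℝ)
    (S : ℕ → Submodule ℝ (Fin n → ℝ))
    (hS0 : S 0 = LinearMap.ker C.mulVecLin)
    (hSrec : ∀ k : ℕ, S (k + 1) = (S k).map A.mulVecLin ⊓ S 0) :
    ∀ (k : ℕ) (x : Fin n → ℝ),
      (x ∈ Set.range (A ^ k).mulVec →
        cls A.mulVec C.mulVec k x = {z | ∃ s ∈ S k, z = x + s}) ∧
      (x ∉ Set.range (A ^ k).mulVec →
        cls A.mulVec C.mulVec k x = ∅) := by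
  intro k
  induction k with
  | zero =>
    intro x
    refine ⟨fun _ => ?_, fun hx => absurd ⟨x, by simp [Matrix.one_mulVec]⟩ hx⟩
    ext z
    simp only [cls, hS0, Set.mem_setOf_eq, LinearMap.mem_ker, Matrix.mulVecLin_apply]
    constructor
    · intro hz
      exact ⟨z - x, by simp [Matrix.mulVec_sub, hz], by abel⟩
    · rintro ⟨s, hs, rfl⟩
      simp [Matrix.mulVec_add, hs]
  | succ k ih =>
    intro x
    constructor
    · rintro ⟨u, rfl⟩
      have hx : A.mulVec ((A ^ k).mulVec u) = (A ^ (k + 1)).mulVec u := by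
        rw [pow_succ', Matrix.mulVec_mulVec]
      have hw0 : (A ^ k).mulVec u ∈ Set.range (A ^ k).mulVec := ⟨u, rfl⟩
      ext v
      simp only [cls, Set.mem_inter_iff, Set.mem_setOf_eq]
      constructor
      · rintro ⟨⟨z, w, hw, hz, rfl⟩, hC⟩
        have hwr : w ∈ Set.range (A ^ k).mulVec := by
          by_contra hwn
          rw [(ih w).2 hwn] at hz
          exact hz
        rw [(ih w).1 hwr] at hz
        obtain ⟨s, hs, rfl⟩ := hz
        refine ⟨A.mulVec s, ?_, by rw [Matrix.mulVec_add, hw]⟩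
        rw [hSrec]
        refine ⟨⟨s, hs, rfl⟩, ?_⟩
        rw [hS0]
        show C.mulVec (A.mulVec s) = 0
        have : C.mulVec (A.mulVec (w + s)) = C.mulVec (A.mulVec w) + C.mulVec (A.mulVec s) := by
          rw [Matrix.mulVec_add, Matrix.mulVec_add]
        rw [Matrix.mulVec_add, hw] at hC
        have h2 : C.mulVec ((A ^ (k + 1)).mulVec u) + C.mulVec (A.mulVec s)
            = C.mulVec ((A ^ (k + 1)).mulVec u) := by
          rw [← Matrix.mulVec_add, hC]
        exact add_left_cancel (h2.trans (add_zero _).symm)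
      · rintro ⟨s, hs, rfl⟩
        rw [hSrec] at hs
        obtain ⟨⟨t, ht, rfl⟩, hs0⟩ := hs
        rw [hS0] at hs0
        have hs0' : C.mulVec (A.mulVec t) = 0 := hs0
        refine ⟨⟨(A ^ k).mulVec u + t, (A ^ k).mulVec u, hx, ?_, ?_⟩, ?_⟩
        · rw [(ih _).1 hw0]; exact ⟨t, ht, rfl⟩
        · rw [Matrix.mulVec_add, hx]; rfl
        · rw [Matrix.mulVec_add]
          rw [show C.mulVec (A.mulVecLin t) = 0 from hs0', add_zero]
    · intro hx
      ext v
      simp only [cls, Set.mem_inter_iff, Set.mem_setOf_eq, Set.mem_empty_iff_false, iff_false,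
        not_and]
      rintro ⟨z, w, hw, hz, rfl⟩ _
      have hwr : w ∈ Set.range (A ^ k).mulVec := by
        by_contra hwn
        rw [(ih w).2 hwn] at hz
        exact hz
      obtain ⟨u, rfl⟩ := hwr
      exact hx ⟨u, by rw [← hw, pow_succ', Matrix.mulVec_mulVec]⟩
end

section
/- Let A be an n×n real matrix and C an m×n real matrix. Take X = ℝ^n, Y = ℝ^m, f(x) = A x, h(x) = C x, let the sets [x]_k be defined as in the context, and let the subspaces S_k be defined by S_0 = ker C and S_{k+1} = (A S_k) ∩ S_0. Then the following are equivalent: (i) there exists p ≥ 1 such that for every x ∈ ℝ^n the set [x]_{p-1} contains at most one element (i.e., is a singleton or empty); (ii) S_n = {0}. -/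
/-- Structure lemma: `[x]ₖ = x + Sₖ` if `x ∈ range Aᵏ`, and `∅` otherwise. -/
lemma cls_struct {n m : ℕ}
    (A : Matrix (Fin n) (Fin n) ℝ) (C : Matrix (Fin m) (Fin n) ℝ)
    (S : ℕ → Submodule ℝ (Fin n → ℝ))
    (hS0 : S 0 = LinearMap.ker C.mulVecLin)
    (hSrec : ∀ k : ℕ, S (k + 1) = (S k).map A.mulVecLin ⊓ S 0) :
    ∀ (k : ℕ) (x z : Fin n → ℝ),
      z ∈ cls A.mulVec C.mulVec k x ↔
        (x ∈ Set.range (A.mulVec^[k]) ∧ z - x ∈ S k) := by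
  intro k
  induction k with
  | zero =>
    intro x z
    simp only [cls, Set.mem_setOf_eq, Function.iterate_zero, Set.range_id,
      Set.mem_univ, true_and, hS0, LinearMap.mem_ker, Matrix.mulVecLin_apply,
      Matrix.mulVec_sub, sub_eq_zero]
  | succ k ih =>
    intro x z
    constructor
    · rintro ⟨⟨u, w, hw, hu, huz⟩, hC⟩
      obtain ⟨⟨v, hv⟩, hsw⟩ := (ih w u).1 hu
      refine ⟨⟨v, ?_⟩, ?_⟩
      · rw [Function.iterate_succ_apply', hv, hw]
      · rw [hSrec]
        refine ⟨⟨u - w, hsw, ?_⟩, ?_⟩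
        · simp only [Matrix.mulVecLin_apply, Matrix.mulVec_sub, huz, hw]
        · rw [hS0]
          exact LinearMap.mem_ker.mpr
            (by rw [Matrix.mulVecLin_apply, Matrix.mulVec_sub, sub_eq_zero]; exact hC)
    · rintro ⟨⟨v, hv⟩, hzx⟩
      rw [hSrec, Submodule.mem_inf, Submodule.mem_map] at hzx
      obtain ⟨⟨s, hs, hAs⟩, h0⟩ := hzx
      rw [hS0, LinearMap.mem_ker, Matrix.mulVecLin_apply] at h0
      simp only [Matrix.mulVecLin_apply] at hAs
      rw [Function.iterate_succ_apply'] at hv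
      refine ⟨⟨A.mulVec^[k] v + s, A.mulVec^[k] v, ?_, ?_, ?_⟩, ?_⟩
      · exact hv
      · exact (ih _ _).2 ⟨⟨v, rfl⟩, by simp [hs]⟩
      · rw [Matrix.mulVec_add, hv, hAs]
        abel
      · have : C.mulVec (z - x) = 0 := h0
        rw [Matrix.mulVec_sub, sub_eq_zero] at this
        exact this
  
/-- The chain `S` is antitone step-by-step. -/
lemma S_step {n : ℕ}
    (A : Matrix (Fin n) (Fin n) ℝ)
    (S : ℕ → Submodule ℝ (Fin n → ℝ))
    (hSrec : ∀ k : ℕ, S (k + 1) = (S k).map A.mulVecLin ⊓ S 0) :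
    ∀ k : ℕ, S (k + 1) ≤ S k := by
  intro k
  induction k with
  | zero => rw [hSrec]; exact inf_le_right
  | succ k ih =>
    rw [hSrec (k + 1)]
    exact le_trans (inf_le_inf (Submodule.map_mono ih) le_rfl)
      (le_of_eq (hSrec k).symm)

lemma S_antitone {n : ℕ}
    (A : Matrix (Fin n) (Fin n) ℝ)
    (S : ℕ → Submodule ℝ (Fin n → ℝ))
    (hSrec : ∀ k : ℕ, S (k + 1) = (S k).map A.mulVecLin ⊓ S 0) :
    ∀ a b : ℕ, a ≤ b → S b ≤ S a := by
  intro a b hab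
  induction b with
  | zero => simp_all
  | succ b ih =>
    rcases Nat.lt_or_ge a (b + 1) with h | h
    · exact le_trans (S_step A S hSrec b) (ih (Nat.lt_succ_iff.1 h))
    · have : a = b + 1 := le_antisymm hab h
      simp [this]

lemma S_stable {n : ℕ}
    (A : Matrix (Fin n) (Fin n) ℝ)
    (S : ℕ → Submodule ℝ (Fin n → ℝ))
    (hSrec : ∀ k : ℕ, S (k + 1) = (S k).map A.mulVecLin ⊓ S 0)
    (i : ℕ) (hi : S i = S (i + 1)) : ∀ j : ℕ, S (i + j) = S i := by
  intro j
  induction j with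
  | zero => rfl
  | succ j ih =>
    have : S (i + j + 1) = S (i + 1) := by rw [hSrec, ih, ← hSrec]
    rw [show i + (j + 1) = i + j + 1 by ring, this, ← hi]

/-- If some `S k = ⊥` then `S n = ⊥`. -/
lemma S_bot {n : ℕ}
    (A : Matrix (Fin n) (Fin n) ℝ)
    (S : ℕ → Submodule ℝ (Fin n → ℝ))
    (hSrec : ∀ k : ℕ, S (k + 1) = (S k).map A.mulVecLin ⊓ S 0)
    (k : ℕ) (hk : S k = ⊥) : S n = ⊥ := by
  have hdich : ∀ j : ℕ, Module.finrank ℝ (S j) + j ≤ n ∨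
      ∃ i, i < j ∧ S i = S (i + 1) := by
    intro j
    induction j with
    | zero =>
      left
      simpa using le_trans (Submodule.finrank_le (S 0))
        (le_of_eq (Module.finrank_fin_fun ℝ))
    | succ j ih =>
      rcases ih with h | ⟨i, hi, hstab⟩
      · by_cases hEq : S j = S (j + 1)
        · exact Or.inr ⟨j, Nat.lt_succ_self j, hEq⟩
        · left
          have hlt : S (j + 1) < S j :=
            lt_of_le_of_ne (S_step A S hSrec j) (fun e => hEq e.symm)
          have := Submodule.finrank_lt_finrank_of_lt hlt
          omega
      · exact Or.inr ⟨i, Nat.lt_succ_of_lt hi, hstab⟩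
  rcases le_or_gt k n with h | h
  · exact le_bot_iff.1 (hk ▸ S_antitone A S hSrec k n h)
  · rcases hdich n with hfr | ⟨i, hi, hstab⟩
    · have : Module.finrank ℝ (S n) = 0 := by omega
      exact Submodule.finrank_eq_zero.1 this
    · have h1 : S n = S i := by
        have := S_stable A S hSrec i hstab (n - i)
        rwa [Nat.add_sub_cancel' (le_of_lt hi)] at this
      have h2 : S k = S i := by
        have := S_stable A S hSrec i hstab (k - i)
        rwa [Nat.add_sub_cancel' (le_of_lt (lt_trans hi h))] at this
      rw [h1, ← h2, hk]

/-- (Theorem 1.) For the linear system `x⁺ = A x`, `y = C x` (real matrices), with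
`S 0 = ker C` and `S (k+1) = A (S k) ⊓ S 0`: there exists `p ≥ 1` such that each
`[x]_{p-1}` is a singleton or empty (Assumption 1) iff `S n = {0}`. -/
theorem stmt7 {n m : ℕ}
    (A : Matrix (Fin n) (Fin n) ℝ) (C : Matrix (Fin m) (Fin n) ℝ)
    (S : ℕ → Submodule ℝ (Fin n → ℝ))
    (hS0 : S 0 = LinearMap.ker C.mulVecLin)
    (hSrec : ∀ k : ℕ, S (k + 1) = (S k).map A.mulVecLin ⊓ S 0) :
    (∃ p : ℕ, 1 ≤ p ∧ ∀ x : Fin n → ℝ, (cls A.mulVec C.mulVec (p - 1) x).Subsingleton)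
      ↔ S n = ⊥ := by
  have hstruct := cls_struct A C S hS0 hSrec
  constructor
  · rintro ⟨p, hp, hsub⟩
    set k := p - 1 with hk
    -- `S k ⊆ [0]ₖ`, so `S k` is subsingleton, hence `⊥`.
    have hmem : ∀ s : Fin n → ℝ, s ∈ S k → s ∈ cls A.mulVec C.mulVec k (0 : Fin n → ℝ) := by
      intro s hs
      refine (hstruct k 0 s).2 ⟨⟨0, ?_⟩, by simpa using hs⟩
      exact Function.iterate_fixed (Matrix.mulVec_zero A) k
    have hSk : S k = ⊥ := by
      rw [Submodule.eq_bot_iff]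
      intro x hx
      exact hsub 0 (hmem x hx) (hmem 0 (Submodule.zero_mem _))
    exact S_bot A S hSrec k hSk
  · intro hSn
    refine ⟨n + 1, by omega, ?_⟩
    intro x z₁ hz₁ z₂ hz₂
    simp only [Nat.add_sub_cancel] at hz₁ hz₂
    have h1 := ((hstruct n x z₁).1 hz₁).2
    have h2 := ((hstruct n x z₂).1 hz₂).2
    rw [hSn, Submodule.mem_bot, sub_eq_zero] at h1 h2
    rw [h1, h2]
end

section
/- Let A be an n×n real matrix and C an m×n real matrix. Take X = ℝ^n, Y = ℝ^m, f(x) = A x, h(x) = C x, and let the sets [x]_k^+ be defined as in the context. Then for all x, x̂ ∈ ℝ^n and all k ∈ ℕ, if x̂ ∈ [x]_k^+ then [x̂]_k^+ = [x]_k^+ (i.e., Assumption 2 of the observer construction holds automatically for linear systems). -/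
/-- The set `[x]ₖ⁺ = f '' [f⁻¹ x]ₖ`. -/
def clsPlus {X Y : Type*} (f : X → X) (h : X → Y) (k : ℕ) (x : X) : Set X :=
  {v | ∃ z w, f w = x ∧ z ∈ cls f h k w ∧ f z = v}

lemma cls_symm {X Y : Type*} (f : X → X) (h : X → Y) :
    ∀ (k : ℕ) (a b : X), a ∈ cls f h k b → b ∈ cls f h k a := by
  intro k
  induction k with
  | zero =>
    intro a b hab
    exact (show h a = h b from hab).symm
  | succ k ih =>
    rintro a b ⟨⟨p, q, hq, hp, hpa⟩, hab⟩
    exact ⟨⟨q, p, hpa, ih _ _ hp, hq⟩, (show h a = h b from hab).symm⟩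

lemma cls_para {X Y : Type*} [AddCommGroup X] [AddCommGroup Y]
    (f : X → X) (h : X → Y)
    (hf : ∀ u v w : X, f (u - v + w) = f u - f v + f w)
    (hh : ∀ u v w : X, h (u - v + w) = h u - h v + h w) :
    ∀ (k : ℕ) (a b a' b' : X), a ∈ cls f h k b → a' ∈ cls f h k b' →
      a - b + a' ∈ cls f h k b' := by
  intro k
  induction k with
  | zero =>
    intro a b a' b' hab ha'b'
    show h (a - b + a') = h b'
    rw [hh, show h a = h b from hab, show h a' = h b' from ha'b']
    abel
  | succ k ih =>
    rintro a b a' b' ⟨⟨p, q, hq, hp, hpa⟩, hab⟩ ⟨⟨p', q', hq', hp', hpa'⟩, ha'b'⟩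
    refine ⟨⟨p - q + p', q', hq', ih _ _ _ _ hp hp', ?_⟩, ?_⟩
    · rw [hf, hpa, hq, hpa']
    · show h (a - b + a') = h b'
      rw [hh, show h a = h b from hab, show h a' = h b' from ha'b']
      abel

/-- (Theorem 2.) Assumption 2 comes for free for linear systems: with `f x = A x` and
`h x = C x`, if `x̂ ∈ [x]ₖ⁺` then `[x̂]ₖ⁺ = [x]ₖ⁺`. -/
theorem stmt8 {n m : ℕ}
    (A : Matrix (Fin n) (Fin n) ℝ) (C : Matrix (Fin m) (Fin n) ℝ) :
    ∀ (x xhat : Fin n → ℝ) (k : ℕ),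
      xhat ∈ clsPlus A.mulVec C.mulVec k x →
        clsPlus A.mulVec C.mulVec k xhat = clsPlus A.mulVec C.mulVec k x := by
  intro x xhat k hmem
  obtain ⟨z0, w0, hw0, hz0, hz0f⟩ := hmem
  have hf : ∀ u v w : Fin n → ℝ,
      A.mulVec (u - v + w) = A.mulVec u - A.mulVec v + A.mulVec w := by
    intro u v w
    simp [Matrix.mulVec_add, Matrix.mulVec_sub]
  have hh : ∀ u v w : Fin n → ℝ,
      C.mulVec (u - v + w) = C.mulVec u - C.mulVec v + C.mulVec w := by
    intro u v w
    simp [Matrix.mulVec_add, Matrix.mulVec_sub]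
  ext v
  constructor
  · rintro ⟨z1, w1, hw1, hz1, hz1f⟩
    refine ⟨z1 - w1 + z0, w0, hw0, cls_para _ _ hf hh k _ _ _ _ hz1 hz0, ?_⟩
    rw [hf, hz1f, hw1, hz0f]
    abel
  · rintro ⟨z1, w1, hw1, hz1, hz1f⟩
    have hw0' : w0 ∈ cls A.mulVec C.mulVec k z0 := cls_symm _ _ k _ _ hz0
    refine ⟨z1 - w1 + w0, z0, hz0f, cls_para _ _ hf hh k _ _ _ _ hz1 hw0', ?_⟩
    rw [hf, hz1f, hw1, hw0]
    abel
end

section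
/- Let X and Y be types, f : X → X, h : X → Y, with the sets [x]_k, [x]_k^+ and [x]_{-1}^+ = X as in the context. Suppose Assumption 1 holds with some p ≥ 1 (for every x ∈ X, the set [x]_{p-1} contains at most one element) and Assumption 2 holds (for all x, x̂ and k, x̂ ∈ [x]_k^+ implies [x̂]_k^+ = [x]_k^+). For x̂ ∈ X and y in the image of h, let π(x̂, y) be the largest index j ∈ {-1, 0, 1, …, p-2} such that [x̂]_j^+ ∩ h^{-1}(y) ≠ ∅ (well defined since [x̂]_{-1}^+ ∩ h^{-1}(y) = h^{-1}(y) ≠ ∅). Fix x ∈ X and let φ(k) = f^k(x). Then for every sequence x̂ : ℕ → X satisfying x̂(k+1) ∈ f '' ( [x̂(k)]_{π(x̂(k), h(φ(k)))}^+ ∩ h^{-1}(h(φ(k))) ) for all k ∈ ℕ, one has x̂(k) = φ(k) for all k ≥ p. That is, the set-valued system x̂⁺ ∈ f([x̂]_{π(x̂,y)}^+ ∩ h^{-1}(y)) is a deadbeat observer for x⁺ = f(x), y = h(x). -/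
/-- The sets `[x]_{j-1}⁺` indexed by the shifted index `j ∈ ℕ` (so that the index `j`
stands for `j - 1 ∈ {-1, 0, 1, …}`); in particular `[x]_{-1}⁺ = X`. -/
def clsPlusE {X Y : Type*} (f : X → X) (h : X → Y) : ℕ → X → Set X
  | 0, _ => Set.univ
  | k + 1, x => clsPlus f h k x

lemma cls_succ_subset {X Y : Type*} (f : X → X) (h : X → Y) :
    ∀ k x, cls f h (k+1) x ⊆ cls f h k x := by
  intro k
  induction k with
  | zero => intro x v hv; exact hv.2
  | succ k ih =>
    intro x v hv
    refine ⟨?_, hv.2⟩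
    obtain ⟨z, w, hw, hz, hfz⟩ := hv.1
    exact ⟨z, w, hw, ih w hz, hfz⟩

lemma clsPlus_succ_subset {X Y : Type*} (f : X → X) (h : X → Y) (k : ℕ) (x : X) :
    clsPlus f h (k+1) x ⊆ clsPlus f h k x := by
  rintro v ⟨z, w, hw, hz, hfz⟩
  exact ⟨z, w, hw, cls_succ_subset f h k w hz, hfz⟩

lemma clsPlusE_anti {X Y : Type*} (f : X → X) (h : X → Y) {j j' : ℕ} (hjj : j ≤ j') (x : X) :
    clsPlusE f h j' x ⊆ clsPlusE f h j x := by
  induction j' with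
  | zero =>
    have : j = 0 := Nat.le_zero.mp hjj
    subst this; exact subset_rfl
  | succ j' ih =>
    rcases Nat.eq_or_lt_of_le hjj with rfl | hlt
    · exact subset_rfl
    · refine subset_trans ?_ (ih (Nat.lt_succ_iff.mp hlt))
      cases j' with
      | zero => intro v _; trivial
      | succ j'' => exact clsPlus_succ_subset f h j'' x

lemma cls_key {X Y : Type*} (f : X → X) (h : X → Y)
    (hassume2 : ∀ (x xhat : X) (k : ℕ),
      xhat ∈ clsPlus f h k x → clsPlus f h k xhat = clsPlus f h k x)
    (j : ℕ) (xh z φ : X) (hz : z ∈ clsPlusE f h j xh) (hφ : φ ∈ clsPlusE f h j xh)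
    (hy : h z = h φ) : φ ∈ cls f h j z := by
  cases j with
  | zero => exact hy.symm
  | succ j =>
    refine ⟨?_, hy.symm⟩
    have heq := hassume2 xh z j hz
    have : φ ∈ clsPlus f h j z := heq ▸ hφ
    exact this

/-- (Theorem 3, the main result.) Under Assumption 1 (each `[x]_{p-1}` is singleton or
empty, `p ≥ 1`) and Assumption 2 (`x̂ ∈ [x]ₖ⁺ ⟹ [x̂]ₖ⁺ = [x]ₖ⁺`), with
`π(x̂, y)` the largest index `j ∈ {-1, 0, …, p-2}` (here encoded by the shifted index
`π(x̂,y) ∈ {0, …, p-1}`, i.e. `clsPlusE f h j x̂ = [x̂]_{j-1}⁺`) such that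
`[x̂]_{j}⁺ ∩ h⁻¹(y) ≠ ∅`, the system `x̂⁺ ∈ f ([x̂]_{π(x̂,y)}⁺ ∩ h⁻¹(y))` is a
deadbeat observer for `x⁺ = f x`, `y = h x`: every solution satisfies
`x̂ k = f^[k] x` for all `k ≥ p`. -/
theorem stmt9 {X Y : Type*} (f : X → X) (h : X → Y) (p : ℕ) (hp : 1 ≤ p)
    (hassume1 : ∀ x : X, (cls f h (p - 1) x).Subsingleton)
    (hassume2 : ∀ (x xhat : X) (k : ℕ),
      xhat ∈ clsPlus f h k x → clsPlus f h k xhat = clsPlus f h k x)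
    (π : X → Y → ℕ)
    (hπle : ∀ (xhat : X) (y : Y), y ∈ Set.range h → π xhat y ≤ p - 1)
    (hπne : ∀ (xhat : X) (y : Y), y ∈ Set.range h →
      (clsPlusE f h (π xhat y) xhat ∩ h ⁻¹' {y}).Nonempty)
    (hπmax : ∀ (xhat : X) (y : Y) (j : ℕ), y ∈ Set.range h → j ≤ p - 1 →
      (clsPlusE f h j xhat ∩ h ⁻¹' {y}).Nonempty → j ≤ π xhat y)
    (x : X) (xhat : ℕ → X)
    (hobs : ∀ k : ℕ, xhat (k + 1) ∈
      f '' (clsPlusE f h (π (xhat k) (h (f^[k] x))) (xhat k) ∩ h ⁻¹' {h (f^[k] x)})) :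
    ∀ k : ℕ, p ≤ k → xhat k = f^[k] x := by
  have Q : ∀ k : ℕ, f^[k] x ∈ clsPlusE f h (min k (p-1)) (xhat k) ∧
      (p ≤ k → xhat k = f^[k] x) := by
    intro k
    induction k with
    | zero =>
      constructor
      · have h0 : min 0 (p-1) = 0 := Nat.zero_min _
        rw [h0]
        show x ∈ (Set.univ : Set X)
        trivial
      · intro hpk; omega
    | succ k ih =>
      have hj : min k (p-1) ≤ p - 1 := min_le_right _ _
      have hφ := ih.1
      have hy : h (f^[k] x) ∈ Set.range h := ⟨_, rfl⟩
      have hne : (clsPlusE f h (min k (p-1)) (xhat k) ∩ h ⁻¹' {h (f^[k] x)}).Nonempty :=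
        ⟨f^[k] x, hφ, rfl⟩
      have hjπ : min k (p-1) ≤ π (xhat k) (h (f^[k] x)) := hπmax _ _ _ hy hj hne
      obtain ⟨z, ⟨hz1, hz2⟩, hz3⟩ := hobs k
      have hz1' : z ∈ clsPlusE f h (min k (p-1)) (xhat k) := clsPlusE_anti f h hjπ _ hz1
      have hz2' : h z = h (f^[k] x) := hz2
      have hkey : f^[k] x ∈ cls f h (min k (p-1)) z :=
        cls_key f h hassume2 _ (xhat k) z _ hz1' hφ hz2'
      have hstep : f^[k+1] x ∈ clsPlusE f h (min k (p-1) + 1) (xhat (k+1)) := by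
        rw [← hz3]
        show f^[k+1] x ∈ clsPlus f h (min k (p-1)) (f z)
        exact ⟨f^[k] x, z, rfl, hkey, (Function.iterate_succ_apply' f k x).symm⟩
      constructor
      · have hle : min (k+1) (p-1) ≤ min k (p-1) + 1 := by omega
        exact clsPlusE_anti f h hle _ hstep
      · intro hpk
        have hj' : min k (p-1) = p - 1 := by omega
        have hzself : z ∈ cls f h (min k (p-1)) z :=
          cls_key f h hassume2 _ (xhat k) z z hz1' hz1' rfl
        rw [hj'] at hkey hzself
        have hez : z = f^[k] x := hassume1 z hzself hkey
        rw [← hz3, hez]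
        exact (Function.iterate_succ_apply' f k x).symm
  intro k hk
  exact (Q k).2 hk
end

section
/- Let n ≥ 2, let A be an n×n real matrix and C a 1×n real matrix such that the pair (C, A) is observable, i.e., the n×n observability matrix with rows C, CA, …, CA^{n-1} has rank n. Let the subspaces S_k of ℝ^n be defined by S_0 = ker C and S_{k+1} = (A S_k) ∩ S_0. Fix x⁰, x̂⁰ ∈ ℝ^n, let x(0) = x⁰ and x(k+1) = A x(k), and let x̂ : ℕ → ℝ^n be any sequence with x̂(0) = x̂⁰ and x̂(k+1) ∈ A '' ( (x̂(k) + A S_{n-2}) ∩ (x(k) + ker C) ) for all k, where x̂(k) + A S_{n-2} = {x̂(k) + A s : s ∈ S_{n-2}} and x(k) + ker C = {x(k) + v : C v = 0}. Then x̂(k) = x(k) for all k ≥ n. -/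
/-- (Corollary 1.) Let `(C, A)` be observable with `C` a `1 × n` real matrix
(`n ≥ 2`), and let `S 0 = ker C`, `S (k+1) = A (S k) ⊓ S 0`. Then the system
`x̂⁺ = A ((x̂ + A S_{n-2}) ∩ (x + ker C))` is a deadbeat observer for
`x⁺ = A x`, `y = C x`: every solution satisfies `x̂ k = x k` for all `k ≥ n`. -/
theorem stmt11 {n : ℕ} (hn : 2 ≤ n)
    (A : Matrix (Fin n) (Fin n) ℝ) (C : Matrix (Fin 1) (Fin n) ℝ)
    (hobs : (Matrix.of fun (i : Fin n) (j : Fin n) => (C * A ^ (i : ℕ)) 0 j).rank = n)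
    (S : ℕ → Submodule ℝ (Fin n → ℝ))
    (hS0 : S 0 = LinearMap.ker C.mulVecLin)
    (hSrec : ∀ k : ℕ, S (k + 1) = (S k).map A.mulVecLin ⊓ S 0)
    (x0 xhat0 : Fin n → ℝ) (x xhat : ℕ → Fin n → ℝ)
    (hx0 : x 0 = x0) (hx : ∀ k : ℕ, x (k + 1) = A.mulVec (x k))
    (hxhat0 : xhat 0 = xhat0)
    (hxhat : ∀ k : ℕ, xhat (k + 1) ∈
      A.mulVec '' ({z | ∃ s ∈ S (n - 2), z = xhat k + A.mulVec s} ∩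
                   {z | ∃ v, C.mulVec v = 0 ∧ z = x k + v})) :
    ∀ k : ℕ, n ≤ k → xhat k = x k := by
  have hmemS0 : ∀ v, v ∈ S 0 ↔ C.mulVec v = 0 := by
    intro v
    rw [hS0, LinearMap.mem_ker, Matrix.mulVecLin_apply]
  -- S is antitone
  have hanti : ∀ k, S (k + 1) ≤ S k := by
    intro k
    induction k with
    | zero => rw [hSrec 0]; exact inf_le_right
    | succ k ih =>
      have h := inf_le_inf (Submodule.map_mono (f := A.mulVecLin) ih) (le_refl (S 0))
      rw [← hSrec k, ← hSrec (k + 1)] at h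
      exact h
  have hmono : ∀ j k : ℕ, j ≤ k → S k ≤ S j :=
    fun j k h => antitone_nat_of_succ_le hanti h
  -- structure of elements of S k
  have hstruct : ∀ k, ∀ v ∈ S k, ∃ u, v = (A ^ k).mulVec u ∧
      ∀ i ≤ k, C.mulVec ((A ^ i).mulVec u) = 0 := by
    intro k
    induction k with
    | zero =>
      intro v hv
      refine ⟨v, by simp, fun i hi => ?_⟩
      have : i = 0 := Nat.le_zero.mp hi
      subst this
      simpa using (hmemS0 v).1 hv
    | succ k ih =>
      intro v hv
      rw [hSrec k] at hv
      obtain ⟨⟨w, hw, hwv⟩, hv0⟩ := hv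
      obtain ⟨u, hu1, hu2⟩ := ih w hw
      have hveq : v = (A ^ (k + 1)).mulVec u := by
        rw [pow_succ', ← Matrix.mulVec_mulVec, ← hu1, ← hwv, Matrix.mulVecLin_apply]
      refine ⟨u, hveq, fun i hi => ?_⟩
      rcases Nat.lt_or_ge i (k + 1) with h | h
      · exact hu2 i (by omega)
      · have : i = k + 1 := by omega
        subst this
        rw [← hveq]
        exact (hmemS0 v).1 hv0
  -- observability gives S (n-1) = ⊥
  set O : Matrix (Fin n) (Fin n) ℝ :=
    Matrix.of fun (i : Fin n) (j : Fin n) => (C * A ^ (i : ℕ)) 0 j with hO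
  have hkerO : LinearMap.ker O.mulVecLin = ⊥ := by
    have h1 := LinearMap.finrank_range_add_finrank_ker O.mulVecLin
    have h2 : Module.finrank ℝ (Fin n → ℝ) = n := by simp
    rw [h2] at h1
    have h3 : Module.finrank ℝ (LinearMap.range O.mulVecLin) = n := hobs
    rw [h3] at h1
    have h4 : Module.finrank ℝ (LinearMap.ker O.mulVecLin) = 0 := by omega
    exact Submodule.finrank_eq_zero.mp h4
  have hSbot : S (n - 1) = ⊥ := by
    rw [Submodule.eq_bot_iff]
    intro v hv
    obtain ⟨u, hu1, hu2⟩ := hstruct (n - 1) v hv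
    have hu0 : O.mulVec u = 0 := by
      funext i
      have hi : (i : ℕ) ≤ n - 1 := by omega
      have := hu2 (i : ℕ) hi
      have h5 : O.mulVec u i = ((C * A ^ (i : ℕ)).mulVec u) 0 := by
        simp [hO, Matrix.mulVec, dotProduct]
      rw [h5, ← Matrix.mulVec_mulVec, this]
      rfl
    have : u ∈ LinearMap.ker O.mulVecLin := by
      rw [LinearMap.mem_ker, Matrix.mulVecLin_apply, hu0]
    rw [hkerO, Submodule.mem_bot] at this
    rw [this] at hu1
    simp [hu1]
  -- main error induction: error lies in A (S k)
  have key : ∀ k, k < n → xhat (k + 1) - x (k + 1) ∈ (S k).map A.mulVecLin := by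
    intro k
    induction k with
    | zero =>
      intro _
      obtain ⟨z, ⟨_, ⟨v, hv, hzv⟩⟩, hz3⟩ := hxhat 0
      refine ⟨v, (hmemS0 v).2 hv, ?_⟩
      rw [Matrix.mulVecLin_apply, ← hz3, hx 0, hzv]
      rw [Matrix.mulVec_add]
      abel
    | succ k ih =>
      intro hk
      have ihh := ih (by omega)
      obtain ⟨z, ⟨⟨s, hs, hzs⟩, ⟨v, hv, hzv⟩⟩, hz3⟩ := hxhat (k + 1)
      have hveq : v = (xhat (k + 1) - x (k + 1)) + A.mulVec s := by
        rw [hzs] at hzv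
        have : v = (xhat (k + 1) + A.mulVec s) - x (k + 1) := by
          rw [hzv]; abel
        rw [this]; abel
      have hvS : v ∈ S (k + 1) := by
        rw [hSrec k]
        constructor
        · rw [hveq]
          refine Submodule.add_mem _ ihh ?_
          exact Submodule.map_mono (hmono k (n - 2) (by omega))
            ⟨s, hs, by rw [Matrix.mulVecLin_apply]⟩
        · exact (hmemS0 v).2 hv
      refine ⟨v, hvS, ?_⟩
      rw [Matrix.mulVecLin_apply, ← hz3, hx (k + 1), hzv, Matrix.mulVec_add]
      abel
  -- error is zero at time n
  have hEn : xhat n = x n := by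
    have h := key (n - 1) (by omega)
    have hnn : n - 1 + 1 = n := by omega
    rw [hnn, hSbot, Submodule.map_bot, Submodule.mem_bot, sub_eq_zero] at h
    exact h
  -- conclude for all k ≥ n
  intro k hk
  induction k with
  | zero => omega
  | succ k ih =>
    rcases Nat.lt_or_ge k n with h | h
    · have : k + 1 = n := by omega
      rw [this]; exact hEn
    · have hxk := ih h
      obtain ⟨z, ⟨⟨s, hs, hzs⟩, ⟨v, hv, hzv⟩⟩, hz3⟩ := hxhat k
      rw [hxk] at hzs
      have hvA : v = A.mulVec s := by
        rw [hzs] at hzv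
        exact (add_left_cancel hzv.symm)
      have hvS : v ∈ S (n - 2 + 1) := by
        rw [hSrec (n - 2)]
        exact ⟨⟨s, hs, by rw [Matrix.mulVecLin_apply, hvA]⟩, (hmemS0 v).2 hv⟩
      have h21 : n - 2 + 1 = n - 1 := by omega
      rw [h21, hSbot, Submodule.mem_bot] at hvS
      rw [hvS, add_zero] at hzv
      rw [← hz3, hzv, ← hx k]
end

section
/- Let n ≥ 1, let A be an n×n real matrix and C a 1×n real matrix such that the pair (C, A) is observable, i.e., the n×n matrix with rows C, CA, …, CA^{n-1} has rank n. Let the subspaces S_k of ℝ^n be defined by S_0 = ker C and S_{k+1} = (A S_k) ∩ S_0. Then S_{n-1} = {0}. -/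
/-- If the pair `(C, A)` is observable (`C` a `1 × n` real matrix, `n ≥ 1`, the
observability matrix with rows `C, CA, …, CA^{n-1}` has rank `n`), then with
`S 0 = ker C` and `S (k+1) = A (S k) ⊓ S 0` one has `S (n-1) = {0}`. -/
theorem stmt12 {n : ℕ} (hn : 1 ≤ n)
    (A : Matrix (Fin n) (Fin n) ℝ) (C : Matrix (Fin 1) (Fin n) ℝ)
    (hobs : (Matrix.of fun (i : Fin n) (j : Fin n) => (C * A ^ (i : ℕ)) 0 j).rank = n)
    (S : ℕ → Submodule ℝ (Fin n → ℝ))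
    (hS0 : S 0 = LinearMap.ker C.mulVecLin)
    (hSrec : ∀ k : ℕ, S (k + 1) = (S k).map A.mulVecLin ⊓ S 0) :
    S (n - 1) = ⊥ := by
  set O : Matrix (Fin n) (Fin n) ℝ :=
    Matrix.of fun (i : Fin n) (j : Fin n) => (C * A ^ (i : ℕ)) 0 j with hO
  -- Key: every element of S k is A^k u with C A^j u = 0 for j ≤ k.
  have key : ∀ k : ℕ, ∀ v ∈ S k, ∃ u : Fin n → ℝ,
      v = (A ^ k).mulVec u ∧ ∀ j ≤ k, (C * A ^ j).mulVec u = 0 := by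
    intro k
    induction k with
    | zero =>
      intro v hv
      rw [hS0] at hv
      refine ⟨v, by simp [Matrix.mulVec_one], ?_⟩
      intro j hj
      interval_cases j
      simpa [Matrix.mulVecLin] using hv
    | succ k ih =>
      intro v hv
      rw [hSrec] at hv
      obtain ⟨hv1, hv2⟩ := hv
      obtain ⟨w, hw, hwv⟩ := hv1
      obtain ⟨u, hu1, hu2⟩ := ih w hw
      refine ⟨u, ?_, ?_⟩
      · rw [← hwv, hu1]
        simp [Matrix.mulVecLin, pow_succ', Matrix.mulVec_mulVec]
      · intro j hj
        rcases Nat.lt_succ_iff_lt_or_eq.mp (Nat.lt_succ_of_le hj) with h | h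
        · exact hu2 j (Nat.lt_succ_iff.mp h)
        · subst h
          rw [hS0] at hv2
          have : C.mulVec v = 0 := hv2
          rw [← hwv, hu1] at this
          simpa [Matrix.mulVecLin, Matrix.mulVec_mulVec, pow_succ'] using this
  -- Observability gives injectivity of O.mulVecLin
  have hinj : Function.Injective O.mulVecLin := by
    have hr : O.rank = Fintype.card (Fin n) := by simpa using hobs
    rw [Matrix.rank] at hr
    have htop : LinearMap.range O.mulVecLin = ⊤ :=
      Submodule.eq_top_of_finrank_eq (by simpa using hr)
    exact (LinearMap.injective_iff_surjective).mpr
      (LinearMap.range_eq_top.mp htop)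
  rw [eq_bot_iff]
  intro v hv
  obtain ⟨u, hu1, hu2⟩ := key (n - 1) v hv
  have hu0 : u = 0 := by
    have : O.mulVec u = 0 := by
      funext i
      have := hu2 (i : ℕ) (Nat.le_sub_one_of_lt i.isLt)
      have := congrFun this 0
      simpa [Matrix.mulVec, dotProduct, hO] using this
    have := hinj (a₁ := u) (a₂ := 0) (by simpa [Matrix.mulVecLin] using this)
    exact this
  simp [hu0, hu1]
end

section
/- Let ∛ : ℝ → ℝ denote the real cube root function, i.e., the inverse of the bijection t ↦ t³ on ℝ. Define f : ℝ³ → ℝ³ by f(x₁, x₂, x₃) = (x₂, ∛x₃, x₁³ + x₂³) and the observer map F : ℝ³ × ℝ → ℝ³ by F((x̂₁, x̂₂, x̂₃), y) = (x̂₂, ∛(x̂₃ − x̂₁³ + y³), x̂₂³ + y³). For arbitrary x⁰, x̂⁰ ∈ ℝ³ define the sequences x(0) = x⁰, x(k+1) = f(x(k)) and x̂(0) = x̂⁰, x̂(k+1) = F(x̂(k), (x(k))₁), where (x(k))₁ is the first coordinate of x(k). Then x̂(k) = x(k) for all k ≥ 3; i.e., x̂⁺ = F(x̂, y) with output y = x₁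 is a deadbeat observer for x⁺ = f(x). -/
/-- (Homogeneous-system example.) Let `∛ : ℝ → ℝ` be the real cube root (the inverse
of `t ↦ t³`). With `f (x₁,x₂,x₃) = (x₂, ∛x₃, x₁³ + x₂³)` and observer map
`F ((x̂₁,x̂₂,x̂₃), y) = (x̂₂, ∛(x̂₃ - x̂₁³ + y³), x̂₂³ + y³)`, for any initial
conditions the observer sequence driven by the output `y = x₁` satisfies
`x̂ k = x k` for all `k ≥ 3`: `x̂⁺ = F(x̂, y)` is a deadbeat observer for `x⁺ = f x`. -/
theorem stmt14 (cbrt : ℝ → ℝ)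
    (hcbrt1 : ∀ t : ℝ, cbrt t ^ 3 = t) (hcbrt2 : ∀ t : ℝ, cbrt (t ^ 3) = t)
    (f : ℝ × ℝ × ℝ → ℝ × ℝ × ℝ)
    (hf : ∀ x : ℝ × ℝ × ℝ, f x = (x.2.1, cbrt x.2.2, x.1 ^ 3 + x.2.1 ^ 3))
    (F : ℝ × ℝ × ℝ → ℝ → ℝ × ℝ × ℝ)
    (hF : ∀ (xhat : ℝ × ℝ × ℝ) (y : ℝ),
      F xhat y = (xhat.2.1, cbrt (xhat.2.2 - xhat.1 ^ 3 + y ^ 3), xhat.2.1 ^ 3 + y ^ 3))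
    (x0 xhat0 : ℝ × ℝ × ℝ) (x xhat : ℕ → ℝ × ℝ × ℝ)
    (hx0 : x 0 = x0) (hx : ∀ k : ℕ, x (k + 1) = f (x k))
    (hxhat0 : xhat 0 = xhat0)
    (hxhat : ∀ k : ℕ, xhat (k + 1) = F (xhat k) (x k).1) :
    ∀ k : ℕ, 3 ≤ k → xhat k = x k := by
  have key : ∀ z : ℝ × ℝ × ℝ, F z z.1 = f z := by
    intro z
    rw [hF, hf]
    refine Prod.ext rfl (Prod.ext ?_ ?_)
    · show cbrt _ = cbrt _; congr 1; ring
    · show _ = _; dsimp only; ring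
  have base : xhat 3 = x 3 := by
    have e1 := hxhat 0
    have e2 := hxhat 1
    have e3 := hxhat 2
    have f1 := hx 0
    have f2 := hx 1
    have f3 := hx 2
    rw [e1] at e2
    rw [show x 1 = f (x 0) from f1] at e2
    rw [e2] at e3
    rw [f1] at f2
    rw [show x 2 = f (f (x 0)) from f2] at e3
    rw [f2] at f3
    rw [show (3:ℕ) = 2 + 1 from rfl, e3, f3]
    simp only [hF, hf, hcbrt1, hcbrt2]
    refine Prod.ext ?_ (Prod.ext ?_ ?_) <;> dsimp only
    · congr 1; ring
    · congr 1; ring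
    · ring
  intro k hk
  obtain ⟨n, rfl⟩ := Nat.exists_eq_add_of_le hk
  induction n with
  | zero => exact base
  | succ m ih =>
    have hm : 3 ≤ 3 + m := by omega
    have := ih hm
    rw [show 3 + (m + 1) = (3 + m) + 1 from rfl, hxhat, hx, this, key]
end

section
/- Let ∛ : ℝ → ℝ denote the real cube root function, and define the observer map F : ℝ³ × ℝ → ℝ³ by F((x̂₁, x̂₂, x̂₃), y) = (x̂₂, ∛(x̂₃ − x̂₁³ + y³), x̂₂³ + y³). For λ ∈ ℝ let Δ_λ : ℝ³ → ℝ³ be the dilation Δ_λ(x₁, x₂, x₃) = (λ x₁, λ x₂, λ³ x₃). Then the observer is homogeneous with respect to Δ: for all x̂ ∈ ℝ³, y ∈ ℝ and λ ∈ ℝ, F(Δ_λ x̂, λ y) = Δ_λ F(x̂, y). -/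
/-- (Homogeneity of the observer.) Let `∛ : ℝ → ℝ` be the real cube root, let
`F ((x̂₁,x̂₂,x̂₃), y) = (x̂₂, ∛(x̂₃ - x̂₁³ + y³), x̂₂³ + y³)` and let
`Δ_λ (x₁,x₂,x₃) = (λx₁, λx₂, λ³x₃)`. Then `F (Δ_λ x̂, λ y) = Δ_λ (F (x̂, y))`
for all `x̂ ∈ ℝ³`, `y ∈ ℝ`, `λ ∈ ℝ`. -/
theorem stmt15 (cbrt : ℝ → ℝ)
    (hcbrt1 : ∀ t : ℝ, cbrt t ^ 3 = t) (hcbrt2 : ∀ t : ℝ, cbrt (t ^ 3) = t)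
    (F : ℝ × ℝ × ℝ → ℝ → ℝ × ℝ × ℝ)
    (hF : ∀ (xhat : ℝ × ℝ × ℝ) (y : ℝ),
      F xhat y = (xhat.2.1, cbrt (xhat.2.2 - xhat.1 ^ 3 + y ^ 3), xhat.2.1 ^ 3 + y ^ 3))
    (Δ : ℝ → ℝ × ℝ × ℝ → ℝ × ℝ × ℝ)
    (hΔ : ∀ (lam : ℝ) (x : ℝ × ℝ × ℝ),
      Δ lam x = (lam * x.1, lam * x.2.1, lam ^ 3 * x.2.2)) :
    ∀ (xhat : ℝ × ℝ × ℝ) (y lam : ℝ),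
      F (Δ lam xhat) (lam * y) = Δ lam (F xhat y) := by
  intro xhat y lam
  have key : ∀ a : ℝ, cbrt (lam ^ 3 * a) = lam * cbrt a := by
    intro a
    have : lam ^ 3 * a = (lam * cbrt a) ^ 3 := by
      rw [mul_pow, hcbrt1]
    rw [this, hcbrt2]
  simp only [hF, hΔ]
  refine Prod.ext rfl (Prod.ext ?_ ?_) <;> simp only
  · rw [← key]; ring_nf
  · ring
end

section
/- Define f : (ℝ_{>0})³ × ℝ_{>0} → (ℝ_{>0})³ by f((x₁, x₂, x₃), u) = (x₁x₂x₃, x₃/x₁, √(x₁x₂u)) and the observer map G : (ℝ_{>0})³ × ℝ_{>0} × ℝ_{>0} → (ℝ_{>0})³ by G((x̂₁, x̂₂, x̂₃), y, u) = (x̂₂x̂₃y, x̂₃/x̂₁, √(x̂₁x̂₂u)). For arbitrary x⁰, x̂⁰ ∈ (ℝ_{>0})³ and an arbitrary input sequence u : ℕ → ℝ_{>0}, define x(0) = x⁰, x(k+1) = f(x(k), u(k)) and x̂(0) = x̂⁰, x̂(k+1) = G(x̂(k), (x(k))₁, u(k)), where (x(k))₁ is the first coordinate of x(k). Then x̂(k)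 = x(k) for all k ≥ 3; i.e., x̂⁺ = G(x̂, y, u) with output y = x₁ is a deadbeat observer for x⁺ = f(x, u). -/
/-- (Example with input.) On positive triples, with
`f ((x₁,x₂,x₃), u) = (x₁x₂x₃, x₃/x₁, √(x₁x₂u))` and observer map
`G ((x̂₁,x̂₂,x̂₃), y, u) = (x̂₂x̂₃y, x̂₃/x̂₁, √(x̂₁x̂₂u))`: for any strictly positive
initial conditions and any strictly positive input sequence, the observer driven
by the output `y = x₁` satisfies `x̂ k = x k` for all `k ≥ 3`; i.e.
`x̂⁺ = G(x̂, y, u)` is a deadbeat observer for `x⁺ = f(x, u)`. -/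
theorem stmt16 (f : ℝ × ℝ × ℝ → ℝ → ℝ × ℝ × ℝ)
    (hf : ∀ (x : ℝ × ℝ × ℝ) (u : ℝ),
      f x u = (x.1 * x.2.1 * x.2.2, x.2.2 / x.1, Real.sqrt (x.1 * x.2.1 * u)))
    (G : ℝ × ℝ × ℝ → ℝ → ℝ → ℝ × ℝ × ℝ)
    (hG : ∀ (xhat : ℝ × ℝ × ℝ) (y u : ℝ),
      G xhat y u = (xhat.2.1 * xhat.2.2 * y, xhat.2.2 / xhat.1,
        Real.sqrt (xhat.1 * xhat.2.1 * u)))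
    (u : ℕ → ℝ) (hu : ∀ k : ℕ, 0 < u k)
    (x0 xhat0 : ℝ × ℝ × ℝ)
    (hx0pos : 0 < x0.1 ∧ 0 < x0.2.1 ∧ 0 < x0.2.2)
    (hxhat0pos : 0 < xhat0.1 ∧ 0 < xhat0.2.1 ∧ 0 < xhat0.2.2)
    (x xhat : ℕ → ℝ × ℝ × ℝ)
    (hx0 : x 0 = x0) (hx : ∀ k : ℕ, x (k + 1) = f (x k) (u k))
    (hxhat0 : xhat 0 = xhat0)
    (hxhat : ∀ k : ℕ, xhat (k + 1) = G (xhat k) (x k).1 (u k)) :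
    ∀ k : ℕ, 3 ≤ k → xhat k = x k := by
  have hxpos : ∀ k, 0 < (x k).1 ∧ 0 < (x k).2.1 ∧ 0 < (x k).2.2 := by
    intro k
    induction k with
    | zero => rw [hx0]; exact hx0pos
    | succ n ih =>
      obtain ⟨h1, h2, h3⟩ := ih
      have hun := hu n
      rw [hx n, hf]
      exact ⟨by positivity, by positivity, Real.sqrt_pos.mpr (by positivity)⟩
  have hxhatpos : ∀ k, 0 < (xhat k).1 ∧ 0 < (xhat k).2.1 ∧ 0 < (xhat k).2.2 := by
    intro k
    induction k with
    | zero => rw [hxhat0]; exact hxhat0pos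
    | succ n ih =>
      obtain ⟨h1, h2, h3⟩ := ih
      obtain ⟨g1, g2, g3⟩ := hxpos n
      have hun := hu n
      rw [hxhat n, hG]
      exact ⟨by positivity, by positivity, Real.sqrt_pos.mpr (by positivity)⟩
  have hlogx : ∀ k,
      Real.log (x (k+1)).1
        = Real.log (x k).1 + Real.log (x k).2.1 + Real.log (x k).2.2 ∧
      Real.log (x (k+1)).2.1 = Real.log (x k).2.2 - Real.log (x k).1 ∧
      Real.log (x (k+1)).2.2
        = (Real.log (x k).1 + Real.log (x k).2.1 + Real.log (u k)) / 2 := by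
    intro k
    obtain ⟨h1, h2, h3⟩ := hxpos k
    have hun := hu k
    rw [hx k, hf]
    refine ⟨?_, ?_, ?_⟩
    · rw [show ((x k).1 * (x k).2.1 * (x k).2.2, (x k).2.2 / (x k).1,
        Real.sqrt ((x k).1 * (x k).2.1 * u k)).1
          = (x k).1 * (x k).2.1 * (x k).2.2 from rfl,
        Real.log_mul (by positivity) h3.ne', Real.log_mul h1.ne' h2.ne']
    · rw [show ((x k).1 * (x k).2.1 * (x k).2.2, (x k).2.2 / (x k).1,
        Real.sqrt ((x k).1 * (x k).2.1 * u k)).2.1 = (x k).2.2 / (x k).1 from rfl,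
        Real.log_div h3.ne' h1.ne']
    · rw [show ((x k).1 * (x k).2.1 * (x k).2.2, (x k).2.2 / (x k).1,
        Real.sqrt ((x k).1 * (x k).2.1 * u k)).2.2
          = Real.sqrt ((x k).1 * (x k).2.1 * u k) from rfl,
        Real.log_sqrt (by positivity), Real.log_mul (by positivity) hun.ne',
        Real.log_mul h1.ne' h2.ne']
  have hlogxhat : ∀ k,
      Real.log (xhat (k+1)).1
        = Real.log (xhat k).2.1 + Real.log (xhat k).2.2 + Real.log (x k).1 ∧
      Real.log (xhat (k+1)).2.1 = Real.log (xhat k).2.2 - Real.log (xhat k).1 ∧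
      Real.log (xhat (k+1)).2.2
        = (Real.log (xhat k).1 + Real.log (xhat k).2.1 + Real.log (u k)) / 2 := by
    intro k
    obtain ⟨h1, h2, h3⟩ := hxhatpos k
    obtain ⟨g1, g2, g3⟩ := hxpos k
    have hun := hu k
    rw [hxhat k, hG]
    refine ⟨?_, ?_, ?_⟩
    · rw [show ((xhat k).2.1 * (xhat k).2.2 * (x k).1, (xhat k).2.2 / (xhat k).1,
        Real.sqrt ((xhat k).1 * (xhat k).2.1 * u k)).1
          = (xhat k).2.1 * (xhat k).2.2 * (x k).1 from rfl,
        Real.log_mul (by positivity) g1.ne', Real.log_mul h2.ne' h3.ne']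
    · rw [show ((xhat k).2.1 * (xhat k).2.2 * (x k).1, (xhat k).2.2 / (xhat k).1,
        Real.sqrt ((xhat k).1 * (xhat k).2.1 * u k)).2.1
          = (xhat k).2.2 / (xhat k).1 from rfl,
        Real.log_div h3.ne' h1.ne']
    · rw [show ((xhat k).2.1 * (xhat k).2.2 * (x k).1, (xhat k).2.2 / (xhat k).1,
        Real.sqrt ((xhat k).1 * (xhat k).2.1 * u k)).2.2
          = Real.sqrt ((xhat k).1 * (xhat k).2.1 * u k) from rfl,
        Real.log_sqrt (by positivity), Real.log_mul (by positivity) hun.ne',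
        Real.log_mul h1.ne' h2.ne']
  have key : xhat 3 = x 3 := by
    obtain ⟨e01, e02, e03⟩ := hlogx 0
    obtain ⟨e11, e12, e13⟩ := hlogx 1
    obtain ⟨e21, e22, e23⟩ := hlogx 2
    obtain ⟨f01, f02, f03⟩ := hlogxhat 0
    obtain ⟨f11, f12, f13⟩ := hlogxhat 1
    obtain ⟨f21, f22, f23⟩ := hlogxhat 2
    obtain ⟨p1, p2, p3⟩ := hxpos 3
    obtain ⟨q1, q2, q3⟩ := hxhatpos 3
    have c1 : (xhat 3).1 = (x 3).1 :=
      Real.log_injOn_pos (Set.mem_Ioi.mpr q1) (Set.mem_Ioi.mpr p1) (by linarith)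
    have c2 : (xhat 3).2.1 = (x 3).2.1 :=
      Real.log_injOn_pos (Set.mem_Ioi.mpr q2) (Set.mem_Ioi.mpr p2) (by linarith)
    have c3 : (xhat 3).2.2 = (x 3).2.2 :=
      Real.log_injOn_pos (Set.mem_Ioi.mpr q3) (Set.mem_Ioi.mpr p3) (by linarith)
    exact Prod.ext_iff.mpr ⟨c1, Prod.ext_iff.mpr ⟨c2, c3⟩⟩
  intro k hk
  induction k, hk using Nat.le_induction with
  | base => exact key
  | succ n hn ih =>
    rw [hxhat n, ih, hx n, hG, hf]
    exact Prod.ext_iff.mpr ⟨by ring, rfl⟩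
end

section
/- Let A be an n×n real matrix and C an m×n real matrix. Then there exists an n×m real matrix L such that (A − L·C)^n = 0 (equivalently, A − L·C is nilpotent, so the Luenberger observer x̂⁺ = A x̂ + L(y − C x̂) is deadbeat) if and only if for every complex number λ ≠ 0 the (n+m)×n complex matrix obtained by stacking A − λI on top of C has rank n (the Popov–Belevitch–Hautus condition for deadbeat observability). -/
open Matrix Submodule Module

namespace Stmt17Aux

variable {n m : ℕ}

noncomputable def Y (A : Matrix (Fin n) (Fin n) ℝ) (C : Matrix (Fin m) (Fin n) ℝ) :
    ℕ → Submodule ℝ (Fin n → ℝ)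
  | 0 => ⊤
  | k + 1 => (Y A C k ⊓ LinearMap.ker C.mulVecLin).map A.mulVecLin

variable (A : Matrix (Fin n) (Fin n) ℝ) (C : Matrix (Fin m) (Fin n) ℝ)

lemma Y_succ (k : ℕ) :
    Y A C (k + 1) = (Y A C k ⊓ LinearMap.ker C.mulVecLin).map A.mulVecLin := rfl

lemma Y_antitone : Antitone (Y A C) := by
  refine antitone_nat_of_succ_le ?_
  intro k
  induction k with
  | zero => exact le_top
  | succ k ih =>
    rw [Y_succ, Y_succ]
    exact Submodule.map_mono (inf_le_inf_right _ ih)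

lemma mem_Y_succ {k : ℕ} {y : Fin n → ℝ} (hy : y ∈ Y A C k) (hCy : C *ᵥ y = 0) :
    A *ᵥ y ∈ Y A C (k + 1) := by
  rw [Y_succ]
  exact Submodule.mem_map_of_mem ⟨hy, by simpa [Matrix.mulVecLin_apply] using hCy⟩

/-- One extension step for the gain construction. -/
lemma extend_step {L : (Fin m → ℝ) →ₗ[ℝ] (Fin n → ℝ)} {j : ℕ}
    (hL : ∀ i, j + 1 ≤ i → ∀ y ∈ Y A C i, A *ᵥ y - L (C *ᵥ y) ∈ Y A C (i + 1)) :
    ∃ L' : (Fin m → ℝ) →ₗ[ℝ] (Fin n → ℝ),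
      ∀ i, j ≤ i → ∀ y ∈ Y A C i, A *ᵥ y - L' (C *ᵥ y) ∈ Y A C (i + 1) := by
  classical
  set Zj : Submodule ℝ (Fin m → ℝ) := (Y A C j).map C.mulVecLin with hZj
  set Zj1 : Submodule ℝ (Fin m → ℝ) := (Y A C (j + 1)).map C.mulVecLin with hZj1
  -- a linear section of C restricted to Y j
  have hfmem : ∀ x ∈ Y A C j, C.mulVecLin x ∈ Zj := fun x hx => Submodule.mem_map_of_mem hx
  set f : ↥(Y A C j) →ₗ[ℝ] ↥Zj := C.mulVecLin.restrict hfmem with hf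
  have hfsurj : LinearMap.range f = ⊤ := by
    rw [LinearMap.range_eq_top]
    rintro ⟨z, hz⟩
    obtain ⟨y, hy, rfl⟩ := hz
    exact ⟨⟨y, hy⟩, rfl⟩
  obtain ⟨g, hg⟩ := f.exists_rightInverse_of_surjective hfsurj
  have hgC : ∀ z : ↥Zj, C *ᵥ (g z : Fin n → ℝ) = (z : Fin m → ℝ) := by
    intro z
    have := congrArg (fun h => ((h z : ↥Zj) : Fin m → ℝ)) hg
    simpa [hf, LinearMap.restrict_coe_apply, Matrix.mulVecLin_apply] using this
  set q : (Fin n → ℝ) →ₗ[ℝ] (Fin n → ℝ) ⧸ Y A C (j + 1) := (Y A C (j + 1)).mkQ with hq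
  set φ : ↥Zj →ₗ[ℝ] (Fin n → ℝ) ⧸ Y A C (j + 1) :=
    q ∘ₗ (A.mulVecLin ∘ₗ (Y A C j).subtype ∘ₗ g - L ∘ₗ Zj.subtype) with hφ
  have hφ_apply : ∀ z : ↥Zj, φ z = q (A *ᵥ (g z : Fin n → ℝ) - L (z : Fin m → ℝ)) := by
    intro z; simp [hφ, Matrix.mulVecLin_apply]
  have hqzero : ∀ x, x ∈ Y A C (j + 1) → q x = 0 := by
    intro x hx
    rwa [← LinearMap.mem_ker, hq, Submodule.ker_mkQ]
  have hφ0 : ∀ z : ↥Zj, (z : Fin m → ℝ) ∈ Zj1 → φ z = 0 := by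
    rintro ⟨z, hz⟩ hz1
    obtain ⟨y'', hy'', hy''z⟩ := hz1
    rw [hφ_apply]
    have key : A *ᵥ (g ⟨z, hz⟩ : Fin n → ℝ) - L z =
        (A *ᵥ ((g ⟨z, hz⟩ : Fin n → ℝ) - y'')) + (A *ᵥ y'' - L (C *ᵥ y'')) := by
      rw [Matrix.mulVec_sub]
      have : C *ᵥ y'' = z := by simpa [Matrix.mulVecLin_apply] using hy''z
      rw [this]; abel
    rw [key, map_add]
    have h1 : A *ᵥ ((g ⟨z, hz⟩ : Fin n → ℝ) - y'') ∈ Y A C (j + 1) := by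
      apply mem_Y_succ
      · exact sub_mem (g ⟨z, hz⟩).2 (Y_antitone A C (Nat.le_succ j) hy'')
      · rw [Matrix.mulVec_sub, hgC]
        have : C *ᵥ y'' = z := by simpa [Matrix.mulVecLin_apply] using hy''z
        rw [this, sub_self]
    have h2 : A *ᵥ y'' - L (C *ᵥ y'') ∈ Y A C (j + 1) :=
      Y_antitone A C (Nat.le_succ (j + 1)) (hL (j + 1) le_rfl y'' hy'')
    rw [hqzero _ h1, hqzero _ h2, add_zero]
  -- a linear section of the quotient map
  obtain ⟨s, hs⟩ := q.exists_rightInverse_of_surjective ((Y A C (j+1)).range_mkQ)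
  have hqs : ∀ u, q (s u) = u := by
    intro u
    exact congrArg (fun h => h u) hs
  -- complement of Zj
  obtain ⟨Q, hQ⟩ := Submodule.exists_isCompl Zj
  set M : (Fin m → ℝ) →ₗ[ℝ] (Fin n → ℝ) := LinearMap.ofIsCompl hQ (s ∘ₗ φ) 0 with hM
  have hM_on : ∀ z : ↥Zj, M (z : Fin m → ℝ) = s (φ z) := by
    intro z; simp [hM, LinearMap.ofIsCompl_left_apply]
  refine ⟨L + M, ?_⟩
  intro i hi y hy
  rcases Nat.lt_or_ge j i with hji | hij
  · -- i ≥ j+1 : M vanishes on C *ᵥ y since C *ᵥ y ∈ Zj1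
    have hyj1 : y ∈ Y A C (j + 1) := Y_antitone A C hji hy
    have hmem : C *ᵥ y ∈ Zj1 := ⟨y, hyj1, by simp [Matrix.mulVecLin_apply]⟩
    have hmemj : C *ᵥ y ∈ Zj :=
      Submodule.map_mono (Y_antitone A C (Nat.le_succ j)) hmem
    have : M (C *ᵥ y) = 0 := by
      have := hM_on ⟨C *ᵥ y, hmemj⟩
      rw [hφ0 ⟨C *ᵥ y, hmemj⟩ hmem, map_zero] at this
      exact this
    simp only [LinearMap.add_apply, this, add_zero]
    exact hL i hji y hy
  · -- i = j
    have hij' : i = j := le_antisymm hij hi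
    subst hij'
    have hmemj : C *ᵥ y ∈ Zj := ⟨y, hy, by simp [Matrix.mulVecLin_apply]⟩
    set z : ↥Zj := ⟨C *ᵥ y, hmemj⟩ with hz
    have hMz : M (C *ᵥ y) = s (φ z) := hM_on z
    have goal_mem : A *ᵥ y - (L (C *ᵥ y) + M (C *ᵥ y)) ∈ Y A C (i + 1) := by
      have hker : q (A *ᵥ y - (L (C *ᵥ y) + M (C *ᵥ y))) = 0 := by
        rw [hMz, map_sub, map_add, hqs, hφ_apply]
        have hrw : A *ᵥ (g z : Fin n → ℝ) - L (z : Fin m → ℝ) =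
            A *ᵥ (g z : Fin n → ℝ) - L (C *ᵥ y) := rfl
        rw [hrw, map_sub]
        have h1 : q (A *ᵥ ((y : Fin n → ℝ) - (g z : Fin n → ℝ))) = 0 := by
          apply hqzero
          apply mem_Y_succ
          · exact sub_mem hy (g z).2
          · rw [Matrix.mulVec_sub, hgC]; simp [hz]
        rw [Matrix.mulVec_sub, map_sub] at h1
        have := sub_eq_zero.mp h1
        rw [this]; abel
      rwa [← LinearMap.mem_ker, hq, Submodule.ker_mkQ] at hker
    simpa using goal_mem

/-- If the chain dies by step `n`, a deadbeat gain exists. -/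
lemma exists_gain (h : Y A C n = ⊥) :
    ∃ L : Matrix (Fin n) (Fin m) ℝ, (A - L * C) ^ n = 0 := by
  classical
  have hbot : ∀ i, n ≤ i → Y A C i = ⊥ := fun i hi =>
    le_bot_iff.mp (h ▸ Y_antitone A C hi)
  have key : ∀ k, ∃ L : (Fin m → ℝ) →ₗ[ℝ] (Fin n → ℝ),
      ∀ i, n - k ≤ i → ∀ y ∈ Y A C i, A *ᵥ y - L (C *ᵥ y) ∈ Y A C (i + 1) := by
    intro k
    induction k with
    | zero =>
      refine ⟨0, fun i hi y hy => ?_⟩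
      rw [hbot i (by simpa using hi)] at hy
      rw [Submodule.mem_bot] at hy
      subst hy
      simp
    | succ k ih =>
      obtain ⟨L, hL⟩ := ih
      rcases Nat.lt_or_ge k n with hk | hk
      · obtain ⟨L', hL'⟩ := extend_step A C (j := n - (k + 1)) (L := L)
          (fun i hi => hL i (by omega))
        exact ⟨L', hL'⟩
      · exact ⟨L, fun i hi => hL i (by omega)⟩
  obtain ⟨L, hL⟩ := key n
  refine ⟨LinearMap.toMatrix' L, ?_⟩
  have hLv : ∀ v, (LinearMap.toMatrix' L) *ᵥ v = L v := by
    intro v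
    have h2 := Matrix.toLin'_toMatrix' L
    calc (LinearMap.toMatrix' L) *ᵥ v = Matrix.toLin' (LinearMap.toMatrix' L) v := rfl
      _ = L v := by rw [h2]
  have hstep : ∀ j, ∀ y ∈ Y A C j, (A - LinearMap.toMatrix' L * C) *ᵥ y ∈ Y A C (j + 1) := by
    intro j y hy
    rw [Matrix.sub_mulVec, ← Matrix.mulVec_mulVec, hLv]
    exact hL j (by omega) y hy
  have hpow : ∀ k, ∀ x, ((A - LinearMap.toMatrix' L * C) ^ k) *ᵥ x ∈ Y A C k := by
    intro k
    induction k with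
    | zero => intro x; simp [Y]
    | succ k ih =>
      intro x
      rw [pow_succ', ← Matrix.mulVec_mulVec]
      exact hstep k _ (ih x)
  have hzero : ∀ x, ((A - LinearMap.toMatrix' L * C) ^ n) *ᵥ x = 0 := by
    intro x
    have := hpow n x
    rwa [h, Submodule.mem_bot] at this
  apply (Matrix.toLin' (R := ℝ) (m := Fin n) (n := Fin n)).injective
  apply LinearMap.ext
  intro x
  simp only [Matrix.toLin'_apply, hzero x, Matrix.zero_mulVec, map_zero, LinearMap.zero_apply]

lemma map_mulVec_ofReal {p q : ℕ} (M : Matrix (Fin p) (Fin q) ℝ) (x : Fin q → ℝ) :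
    (M.map (Complex.ofReal)) *ᵥ (fun i => (x i : ℂ)) = fun i => ((M *ᵥ x) i : ℂ) := by
  funext i
  simp only [Matrix.mulVec, dotProduct, Matrix.map_apply, Complex.ofReal_sum,
    Complex.ofReal_mul]

lemma re_mulVec {p q : ℕ} (M : Matrix (Fin p) (Fin q) ℝ) (v : Fin q → ℂ) :
    (fun i => (((M.map Complex.ofReal) *ᵥ v) i).re) = M *ᵥ (fun i => (v i).re) := by
  funext i
  simp only [Matrix.mulVec, dotProduct, Matrix.map_apply, Complex.re_sum,
    Complex.mul_re, Complex.ofReal_re, Complex.ofReal_im, zero_mul, sub_zero]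

lemma im_mulVec {p q : ℕ} (M : Matrix (Fin p) (Fin q) ℝ) (v : Fin q → ℂ) :
    (fun i => (((M.map Complex.ofReal) *ᵥ v) i).im) = M *ᵥ (fun i => (v i).im) := by
  funext i
  simp only [Matrix.mulVec, dotProduct, Matrix.map_apply, Complex.im_sum,
    Complex.mul_im, Complex.ofReal_re, Complex.ofReal_im, zero_mul, add_zero]

/-- If the chain is still nonzero at step `n`, it yields a nonzero eigenvalue of `A`
whose eigenvector is killed by `C`. -/
lemma exists_bad_eigen (h : Y A C n ≠ ⊥) :
    ∃ lam : ℂ, lam ≠ 0 ∧ ∃ v : Fin n → ℂ, v ≠ 0 ∧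
      (A.map Complex.ofReal) *ᵥ v = lam • v ∧ (C.map Complex.ofReal) *ᵥ v = 0 := by
  classical
  -- stabilization
  have hstab : ∃ k, k < n ∧ Y A C (k + 1) = Y A C k := by
    by_contra hc
    push_neg at hc
    have hrank : ∀ k, k ≤ n → finrank ℝ (Y A C k) + k ≤ n := by
      intro k
      induction k with
      | zero =>
        intro _
        have : finrank ℝ (Y A C 0) ≤ finrank ℝ (Fin n → ℝ) := Submodule.finrank_le _
        simpa using this.trans_eq (by simp)
      | succ k ih =>
        intro hk
        have hlt : Y A C (k + 1) < Y A C k :=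
          lt_of_le_of_ne (Y_antitone A C (Nat.le_succ k)) (hc k (by omega))
        have := Submodule.finrank_lt_finrank_of_lt hlt
        have := ih (by omega)
        omega
    have h0 : finrank ℝ (Y A C n) = 0 := by have := hrank n le_rfl; omega
    exact h (Submodule.finrank_eq_zero.mp h0)
  obtain ⟨k, hkn, hkeq⟩ := hstab
  have hconst : ∀ i, k ≤ i → Y A C i = Y A C k := by
    intro i hi
    induction i with
    | zero =>
      have hk0 : k = 0 := by omega
      rw [hk0]
    | succ i ih =>
      rcases Nat.lt_or_ge k (i + 1) with h1 | h1
      · have hki : k ≤ i := by omega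
        rw [Y_succ, ih hki, ← Y_succ, hkeq]
      · have hk1 : k = i + 1 := by omega
        rw [hk1]
  have hW : Y A C (n + 1) = Y A C n := by
    rw [hconst (n + 1) (by omega), hconst n (by omega)]
  have hmap : (Y A C n ⊓ LinearMap.ker C.mulVecLin).map A.mulVecLin = Y A C n := by
    rw [← Y_succ]; exact hW
  -- W ≤ ker C and A maps W onto W
  have hinf : Y A C n ⊓ LinearMap.ker C.mulVecLin = Y A C n := by
    apply Submodule.eq_of_le_of_finrank_le inf_le_left
    calc finrank ℝ ↥(Y A C n)
        = finrank ℝ ↥((Y A C n ⊓ LinearMap.ker C.mulVecLin).map A.mulVecLin) := by rw [hmap]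
      _ ≤ finrank ℝ ↥(Y A C n ⊓ LinearMap.ker C.mulVecLin) := Submodule.finrank_map_le _ _
  have hWker : Y A C n ≤ LinearMap.ker C.mulVecLin := inf_eq_left.mp hinf
  have hAW : (Y A C n).map A.mulVecLin = Y A C n := by
    calc (Y A C n).map A.mulVecLin
        = (Y A C n ⊓ LinearMap.ker C.mulVecLin).map A.mulVecLin := by rw [hinf]
      _ = Y A C n := hmap
  have hAmem : ∀ x ∈ Y A C n, A.mulVecLin x ∈ Y A C n := fun x hx => hAW ▸ Submodule.mem_map_of_mem hx
  -- injectivity of A on W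
  have hAinj : ∀ w ∈ Y A C n, A *ᵥ w = 0 → w = 0 := by
    set e : ↥(Y A C n) →ₗ[ℝ] ↥(Y A C n) := A.mulVecLin.restrict hAmem with he
    have hsurj : Function.Surjective e := by
      rintro ⟨y, hy⟩
      rw [← hAW] at hy
      obtain ⟨x, hx, rfl⟩ := hy
      exact ⟨⟨x, hx⟩, Subtype.ext (by simp [he, LinearMap.restrict_coe_apply])⟩
    have hinj : Function.Injective e := LinearMap.injective_iff_surjective.mpr hsurj
    intro w hw hw0
    have : e ⟨w, hw⟩ = e 0 := by
      apply Subtype.ext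
      simp [he, LinearMap.restrict_coe_apply, Matrix.mulVecLin_apply, hw0]
    have := hinj this
    simpa [Subtype.ext_iff] using this
  -- complexification
  set ι : (Fin n → ℝ) → (Fin n → ℂ) := fun x i => (x i : ℂ) with hι
  set WC : Submodule ℂ (Fin n → ℂ) := Submodule.span ℂ (ι '' ((Y A C n) : Set (Fin n → ℝ))) with hWC
  have hWCA : ∀ v ∈ WC, (A.map Complex.ofReal).mulVecLin v ∈ WC := by
    intro v hv
    induction hv using Submodule.span_induction with
    | mem x hx =>
      obtain ⟨w, hw, rfl⟩ := hx
      rw [Matrix.mulVecLin_apply, hι]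
      rw [map_mulVec_ofReal]
      exact Submodule.subset_span ⟨A *ᵥ w, hAW ▸ Submodule.mem_map_of_mem hw, rfl⟩
    | zero => simp
    | add x y hx hy ihx ihy => rw [map_add]; exact add_mem ihx ihy
    | smul c x hx ihx => rw [LinearMap.map_smul]; exact Submodule.smul_mem _ _ ihx
  have hWCC : ∀ v ∈ WC, (C.map Complex.ofReal) *ᵥ v = 0 := by
    intro v hv
    induction hv using Submodule.span_induction with
    | mem x hx =>
      obtain ⟨w, hw, rfl⟩ := hx
      rw [hι, map_mulVec_ofReal]
      have : C *ᵥ w = 0 := by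
        have := hWker hw
        simpa [Matrix.mulVecLin_apply] using this
      rw [this]
      funext i; simp
    | zero => simp
    | add x y hx hy ihx ihy => rw [Matrix.mulVec_add, ihx, ihy, add_zero]
    | smul c x hx ihx => rw [Matrix.mulVec_smul, ihx, smul_zero]
  have hreim : ∀ v ∈ WC,
      (fun i => (v i).re) ∈ Y A C n ∧ (fun i => (v i).im) ∈ Y A C n := by
    intro v hv
    induction hv using Submodule.span_induction with
    | mem x hx =>
      obtain ⟨w, hw, rfl⟩ := hx
      constructor
      · have : (fun i => ((ι w) i).re) = w := by funext i; simp [hι]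
        rw [this]; exact hw
      · have : (fun i => ((ι w) i).im) = (0 : Fin n → ℝ) := by funext i; simp [hι]
        rw [this]; exact zero_mem _
    | zero =>
      constructor
      · have h0 : (fun i => ((0 : Fin n → ℂ) i).re) = (0 : Fin n → ℝ) := by funext i; simp
        rw [h0]; exact zero_mem _
      · have h0 : (fun i => ((0 : Fin n → ℂ) i).im) = (0 : Fin n → ℝ) := by funext i; simp
        rw [h0]; exact zero_mem _
    | add x y hx hy ihx ihy =>
      constructor
      · have : (fun i => ((x + y) i).re) =
            (fun i => (x i).re) + (fun i => (y i).re) := by funext i; simp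
        rw [this]; exact add_mem ihx.1 ihy.1
      · have : (fun i => ((x + y) i).im) =
            (fun i => (x i).im) + (fun i => (y i).im) := by funext i; simp
        rw [this]; exact add_mem ihx.2 ihy.2
    | smul c x hx ihx =>
      constructor
      · have : (fun i => ((c • x) i).re) =
            c.re • (fun i => (x i).re) - c.im • (fun i => (x i).im) := by
          funext i; simp [Complex.mul_re]
        rw [this]; exact sub_mem (Submodule.smul_mem _ _ ihx.1) (Submodule.smul_mem _ _ ihx.2)
      · have : (fun i => ((c • x) i).im) =
            c.re • (fun i => (x i).im) + c.im • (fun i => (x i).re) := by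
          funext i; simp [Complex.mul_im]; try ring
        rw [this]; exact add_mem (Submodule.smul_mem _ _ ihx.2) (Submodule.smul_mem _ _ ihx.1)
  -- WC is nontrivial
  obtain ⟨w0, hw0W, hw0⟩ := (Submodule.ne_bot_iff (Y A C n)).mp h
  have hv0 : ι w0 ∈ WC := Submodule.subset_span ⟨w0, hw0W, rfl⟩
  have hv0ne : ι w0 ≠ 0 := by
    intro hcon
    apply hw0
    funext i
    have := congrFun hcon i
    simpa [hι, Complex.ofReal_eq_zero] using this
  haveI : Nontrivial ↥WC :=
    nontrivial_of_ne ⟨ι w0, hv0⟩ 0 (by simp [Subtype.ext_iff, hv0ne])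
  -- eigenvalue
  set fC : ↥WC →ₗ[ℂ] ↥WC := (A.map Complex.ofReal).mulVecLin.restrict hWCA with hfC
  obtain ⟨μ, hμ⟩ := Module.End.exists_eigenvalue fC
  obtain ⟨v, hv⟩ := hμ.exists_hasEigenvector
  have hvA : (A.map Complex.ofReal) *ᵥ (v : Fin n → ℂ) = μ • (v : Fin n → ℂ) := by
    have := hv.apply_eq_smul
    have := congrArg Subtype.val this
    simpa [hfC, LinearMap.restrict_coe_apply, Matrix.mulVecLin_apply] using this
  have hvne : (v : Fin n → ℂ) ≠ 0 := by
    intro hcon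
    exact hv.right (Subtype.ext hcon)
  have hμ0 : μ ≠ 0 := by
    intro hcon
    rw [hcon, zero_smul] at hvA
    obtain ⟨hre, him⟩ := hreim _ v.2
    have ha : A *ᵥ (fun i => ((v : Fin n → ℂ) i).re) = 0 := by
      rw [← re_mulVec, hvA]; funext i; simp
    have hb : A *ᵥ (fun i => ((v : Fin n → ℂ) i).im) = 0 := by
      rw [← im_mulVec, hvA]; funext i; simp
    have ha0 := hAinj _ hre ha
    have hb0 := hAinj _ him hb
    apply hvne
    funext i
    have h1 := congrFun ha0 i
    have h2 := congrFun hb0 i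
    exact Complex.ext (by simpa using h1) (by simpa using h2)
  exact ⟨μ, hμ0, v, hvne, hvA, hWCC _ v.2⟩

lemma rank_eq_iff_ker_eq_bot {p : Type*} {q : ℕ} (M : Matrix p (Fin q) ℂ) :
    M.rank = q ↔ LinearMap.ker M.mulVecLin = ⊥ := by
  have h := LinearMap.finrank_range_add_finrank_ker M.mulVecLin
  have hn : finrank ℂ (Fin q → ℂ) = q := by simp
  rw [hn] at h
  rw [Matrix.rank]
  constructor
  · intro hr
    have h0 : finrank ℂ ↥(LinearMap.ker M.mulVecLin) = 0 := by omega
    exact Submodule.finrank_eq_zero.mp h0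
  · intro hk
    rw [hk] at h
    simpa using h

lemma Yn_eq_bot_of_pbh
    (hpbh : ∀ lam : ℂ, lam ≠ 0 →
      (Matrix.fromRows (A.map Complex.ofReal - lam • (1 : Matrix (Fin n) (Fin n) ℂ))
        (C.map Complex.ofReal)).rank = n) :
    Y A C n = ⊥ := by
  by_contra h
  obtain ⟨lam, hlam, v, hv, hAv, hCv⟩ := exists_bad_eigen A C h
  have hr := hpbh lam hlam
  rw [rank_eq_iff_ker_eq_bot] at hr
  have hvker : v ∈ LinearMap.ker (Matrix.fromRows
      (A.map Complex.ofReal - lam • (1 : Matrix (Fin n) (Fin n) ℂ))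
      (C.map Complex.ofReal)).mulVecLin := by
    rw [LinearMap.mem_ker, Matrix.mulVecLin_apply, Matrix.fromRows_mulVec]
    have h1 : (A.map Complex.ofReal - lam • (1 : Matrix (Fin n) (Fin n) ℂ)) *ᵥ v = 0 := by
      rw [Matrix.sub_mulVec, Matrix.smul_mulVec, Matrix.one_mulVec, hAv, sub_self]
    rw [h1, hCv]
    funext i; cases i <;> rfl
  rw [hr, Submodule.mem_bot] at hvker
  exact hv hvker

lemma map_pow_ofReal {p : ℕ} (M : Matrix (Fin p) (Fin p) ℝ) (k : ℕ) :
    (M ^ k).map Complex.ofReal = (M.map Complex.ofReal) ^ k := by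
  induction k with
  | zero =>
    simp only [pow_zero]
    exact Matrix.map_one _ Complex.ofReal_zero Complex.ofReal_one
  | succ k ih =>
    rw [pow_succ, pow_succ, ← ih]
    exact Matrix.map_mul (f := Complex.ofRealHom)

lemma pbh_of_gain {L : Matrix (Fin n) (Fin m) ℝ} (hL : (A - L * C) ^ n = 0) :
    ∀ lam : ℂ, lam ≠ 0 →
      (Matrix.fromRows (A.map Complex.ofReal - lam • (1 : Matrix (Fin n) (Fin n) ℂ))
        (C.map Complex.ofReal)).rank = n := by
  intro lam hlam
  rw [rank_eq_iff_ker_eq_bot]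
  rw [Matrix.ker_mulVecLin_eq_bot_iff]
  intro v hv
  rw [Matrix.fromRows_mulVec] at hv
  have h1 : (A.map Complex.ofReal - lam • (1 : Matrix (Fin n) (Fin n) ℂ)) *ᵥ v = 0 := by
    funext i; exact congrFun hv (Sum.inl i)
  have h2 : (C.map Complex.ofReal) *ᵥ v = 0 := by
    funext i; exact congrFun hv (Sum.inr i)
  have hAv : (A.map Complex.ofReal) *ᵥ v = lam • v := by
    rw [Matrix.sub_mulVec, sub_eq_zero, Matrix.smul_mulVec, Matrix.one_mulVec] at h1
    exact h1
  have hsub : (A - L * C).map Complex.ofReal =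
      A.map Complex.ofReal - (L.map Complex.ofReal) * (C.map Complex.ofReal) := by
    ext i j
    simp only [Matrix.map_apply, Matrix.sub_apply, Matrix.mul_apply, Complex.ofReal_sub]
    push_cast
    ring
  have hMv : ((A - L * C).map Complex.ofReal) *ᵥ v = lam • v := by
    rw [hsub, Matrix.sub_mulVec, ← Matrix.mulVec_mulVec, h2, Matrix.mulVec_zero, sub_zero, hAv]
  have hpow : ∀ k, (((A - L * C).map Complex.ofReal) ^ k) *ᵥ v = lam ^ k • v := by
    intro k
    induction k with
    | zero => simp
    | succ k ih =>
      rw [pow_succ', ← Matrix.mulVec_mulVec, ih, Matrix.mulVec_smul, hMv, smul_smul,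
        ← pow_succ]
  have h0 : (((A - L * C).map Complex.ofReal) ^ n) *ᵥ v = 0 := by
    rw [← map_pow_ofReal, hL]
    rw [Matrix.map_zero _ Complex.ofReal_zero, Matrix.zero_mulVec]
  rw [hpow n] at h0
  rcases smul_eq_zero.mp h0 with h | h
  · exact absurd h (pow_ne_zero n hlam)
  · exact h

end Stmt17Aux

/-- (Deadbeat observability ↔ PBH condition.) For real matrices `A` (`n × n`) and `C`
(`m × n`): there exists a gain `L` with `(A - L C)ⁿ = 0` (i.e. `A - L C` nilpotent, so
the Luenberger observer `x̂⁺ = A x̂ + L (y - C x̂)` is deadbeat) iff for every complex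
`λ ≠ 0` the `(n+m) × n` matrix obtained by stacking `A - λ I` on top of `C` has
rank `n`. -/
theorem stmt17 {n m : ℕ}
    (A : Matrix (Fin n) (Fin n) ℝ) (C : Matrix (Fin m) (Fin n) ℝ) :
    (∃ L : Matrix (Fin n) (Fin m) ℝ, (A - L * C) ^ n = 0) ↔
      ∀ lam : ℂ, lam ≠ 0 →
        (Matrix.fromRows (A.map (Complex.ofReal) - lam • (1 : Matrix (Fin n) (Fin n) ℂ))
          (C.map (Complex.ofReal))).rank = n := by
  constructor
  · rintro ⟨L, hL⟩
    exact Stmt17Aux.pbh_of_gain A C hL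
  · intro hpbh
    exact Stmt17Aux.exists_gain A C (Stmt17Aux.Yn_eq_bot_of_pbh A C hpbh)
end
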